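/- arXiv:1010.2947 — 2 statements merged into one kernel-verified Lean document; each statement's English description precedes it below -/
import Mathlib

section
/- Let λ, μ be real constants with μ > 0 and λ + 2μ > 0, let k, l ∈ ℝ with k² + l² > 0, let t ≥ 0, and let g : [0,t] → ℂ be continuous. For m ∈ ℂ define W^{(1)}(m) = −i ∫₀ᵗ (t−s)·φ( (λ+2μ)(k²+l²+m²)(t−s)² )·g(s) ds and W^{(2)}(m) = −i ∫₀ᵗ (t−s)·φ( μ(k²+l²+m²)(t−s)² )·g(s) ds. Then there exists an entire function H : ℂ → ℂ such that for every m ∈ ℂ with k² + l² + m² ≠ 0, H(m) = ( 2k·(λ(k²+l²) + m²(λ+2μ))·W^{(1)}(m) − 4μk m²·W^{(2)}(m) ) / ( k² + l² + m² ). In other words, the function H₁ of the paper extends analytically across the points m = ± i√(k²+l²). -/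
open MeasureTheory intervalIntegral Set

noncomputable section

/-- The entire function `φ(ζ) = ∑ (−1)ⁿ ζⁿ / (2n+1)!`, so that `φ(z²) = sin z / z` for `z ≠ 0`. -/
def phi (ζ : ℂ) : ℂ := ∑' n : ℕ, (-1) ^ n * ζ ^ n / ((2 * n + 1).factorial : ℂ)

/-!
With `c = k² + l² + m²` the numerator equals `2kλ c W⁽¹⁾ + 4μk m² (W⁽¹⁾ − W⁽²⁾)`. Both `W⁽ʲ⁾` depend
on `m` only through `c` and are entire in `c`, because `φ` is entire and can be differentiated under
the integral over the compact interval `[0, t]`. At `c = 0` both integrands reduce to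
`(t − s) φ(0) g(s)`, so `W⁽¹⁾ − W⁽²⁾` vanishes there and its quotient by `c` (`dslope` at `0`) is
entire by the removable singularity theorem.
-/

open Filter FormalMultilinearSeries

def phiCoeff (n : ℕ) : ℂ := (-1) ^ n / ((2 * n + 1).factorial : ℂ)

theorem phi_eq_ofScalarsSum : phi = ofScalarsSum phiCoeff := by
  funext ζ
  rw [ofScalars_sum_eq]
  refine tsum_congr fun n => ?_
  rw [phiCoeff, smul_eq_mul]
  ring

theorem radius_ofScalars_phiCoeff : (ofScalars ℂ phiCoeff).radius = ⊤ := by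
  refine radius_eq_top_of_summable_norm _ fun r => ?_
  refine (Real.summable_pow_div_factorial r).of_nonneg_of_le (fun n => by positivity) fun n => ?_
  rw [ofScalars_norm, phiCoeff, norm_div, norm_pow, norm_neg, norm_one, one_pow,
    Complex.norm_natCast, one_div_mul_eq_div]
  exact div_le_div_of_nonneg_left (by positivity) (by positivity)
    (Nat.cast_le.2 (Nat.factorial_le (by omega)))

theorem differentiable_phi : Differentiable ℂ phi := by
  have hp := (ofScalars ℂ phiCoeff).hasFPowerSeriesOnBall (by simp [radius_ofScalars_phiCoeff])
  rw [radius_ofScalars_phiCoeff] at hp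
  have hdiff := hp.differentiableOn
  rw [Metric.eball_top, differentiableOn_univ] at hdiff
  rw [phi_eq_ofScalarsSum]
  exact hdiff

theorem differentiable_intervalIntegral_comp_mul {Φ : ℂ → ℂ} (hΦ : Differentiable ℂ Φ)
    {a b : ℝ → ℂ} {α β : ℝ} (ha : ContinuousOn a (uIcc α β)) (hb : ContinuousOn b (uIcc α β)) :
    Differentiable ℂ fun c : ℂ => ∫ s in α..β, Φ (c * a s) * b s := by
  intro c₀
  obtain ⟨A, hA⟩ := isCompact_uIcc.exists_bound_of_continuousOn ha
  obtain ⟨B, hB⟩ := isCompact_uIcc.exists_bound_of_continuousOn hb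
  have hΦ' : Continuous (deriv Φ) := (hΦ.contDiff (n := 1)).continuous_deriv le_rfl
  obtain ⟨K, hK⟩ := (isCompact_closedBall (0 : ℂ) ((‖c₀‖ + 1) * A)).exists_bound_of_continuousOn
    hΦ'.continuousOn
  have hF : ∀ c : ℂ, ContinuousOn (fun s => Φ (c * a s) * b s) (uIcc α β) := fun c =>
    (hΦ.continuous.comp_continuousOn (continuousOn_const.mul ha)).mul hb
  have hF' : ContinuousOn (fun s => deriv Φ (c₀ * a s) * a s * b s) (uIcc α β) :=
    ((hΦ'.comp_continuousOn (continuousOn_const.mul ha)).mul ha).mul hb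
  refine (hasDerivAt_integral_of_dominated_loc_of_deriv_le (x₀ := c₀) (bound := fun _ => K * A * B)
    (F' := fun c s => deriv Φ (c * a s) * a s * b s)
    (Metric.ball_mem_nhds c₀ one_pos)
    (Eventually.of_forall fun c =>
      ((hF c).mono uIoc_subset_uIcc).aestronglyMeasurable measurableSet_uIoc)
    ((hF c₀).intervalIntegrable)
    ((hF'.mono uIoc_subset_uIcc).aestronglyMeasurable measurableSet_uIoc)
    ?_ intervalIntegrable_const ?_).2.differentiableAt
  · refine Eventually.of_forall fun s hs c hc => ?_
    have hAs : ‖a s‖ ≤ A := hA s (uIoc_subset_uIcc hs)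
    have hBs : ‖b s‖ ≤ B := hB s (uIoc_subset_uIcc hs)
    have hc' : ‖c‖ ≤ ‖c₀‖ + 1 := by
      have := norm_le_norm_add_norm_sub' c c₀
      rw [Metric.mem_ball, dist_eq_norm] at hc
      linarith
    have hK' : ‖deriv Φ (c * a s)‖ ≤ K := hK _ <| mem_closedBall_zero_iff.2 <| by
      rw [norm_mul]
      gcongr
    have hK0 : 0 ≤ K := (norm_nonneg _).trans hK'
    have hA0 : 0 ≤ A := (norm_nonneg _).trans hAs
    rw [norm_mul, norm_mul]
    gcongr
  · refine Eventually.of_forall fun s _ c _ => ?_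
    simpa [mul_comm, mul_assoc, mul_left_comm] using
      ((hΦ (c * a s)).hasDerivAt.comp c ((hasDerivAt_id c).mul_const (a s))).mul_const (b s)

theorem Differentiable.dslope {E : Type*} [NormedAddCommGroup E] [NormedSpace ℂ E]
    [CompleteSpace E] {f : ℂ → E} (hf : Differentiable ℂ f) (c : ℂ) :
    Differentiable ℂ (dslope f c) :=
  differentiableOn_univ.1 <| (Complex.differentiableOn_dslope univ_mem).2 hf.differentiableOn

theorem differentiable_integral_mul_phi (x : ℂ) {t : ℝ} (ht : 0 ≤ t) {g : ℝ → ℂ}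
    (hg : ContinuousOn g (Icc 0 t)) :
    Differentiable ℂ fun c : ℂ =>
      ∫ s in (0 : ℝ)..t, ((t - s : ℝ) : ℂ) * phi (x * c * ((t - s : ℝ) : ℂ) ^ 2) * g s := by
  have hw : Continuous fun s : ℝ => ((t - s : ℝ) : ℂ) := by fun_prop
  rw [← uIcc_of_le ht] at hg
  convert differentiable_intervalIntegral_comp_mul differentiable_phi
    (a := fun s => x * ((t - s : ℝ) : ℂ) ^ 2) (by fun_prop) (b := fun s => ((t - s : ℝ) : ℂ) * g s)
    (hw.continuousOn.mul hg) using 4 with c s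
  rw [← mul_assoc c x, mul_comm c x]
  ring

theorem H1_extends_entire_general (lam mu : ℝ)
    (k l : ℝ) (t : ℝ) (ht : 0 ≤ t)
    (g : ℝ → ℂ) (hg : ContinuousOn g (Icc (0 : ℝ) t)) :
    ∃ H : ℂ → ℂ, Differentiable ℂ H ∧
      ∀ m : ℂ, (k : ℂ) ^ 2 + (l : ℂ) ^ 2 + m ^ 2 ≠ 0 →
        H m = (2 * (k : ℂ) * ((lam : ℂ) * ((k : ℂ) ^ 2 + (l : ℂ) ^ 2)
                  + m ^ 2 * ((lam : ℂ) + 2 * (mu : ℂ))) *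
                (-Complex.I * ∫ s in (0 : ℝ)..t, ((t - s : ℝ) : ℂ) *
                  phi (((lam : ℂ) + 2 * (mu : ℂ)) * ((k : ℂ) ^ 2 + (l : ℂ) ^ 2 + m ^ 2) *
                    ((t - s : ℝ) : ℂ) ^ 2) * g s)
              - 4 * (mu : ℂ) * (k : ℂ) * m ^ 2 *
                (-Complex.I * ∫ s in (0 : ℝ)..t, ((t - s : ℝ) : ℂ) *
                  phi ((mu : ℂ) * ((k : ℂ) ^ 2 + (l : ℂ) ^ 2 + m ^ 2) *
                    ((t - s : ℝ) : ℂ) ^ 2) * g s)) /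
            ((k : ℂ) ^ 2 + (l : ℂ) ^ 2 + m ^ 2) := by
  set W : ℂ → ℂ → ℂ := fun x c =>
    ∫ s in (0 : ℝ)..t, ((t - s : ℝ) : ℂ) * phi (x * c * ((t - s : ℝ) : ℂ) ^ 2) * g s
  set a : ℂ := lam + 2 * mu
  set D := dslope (fun c => W a c - W mu c) 0
  have hD : Differentiable ℂ D :=
    ((differentiable_integral_mul_phi a ht hg).sub
      (differentiable_integral_mul_phi mu ht hg)).dslope 0
  have hW0 : W a 0 = W mu 0 := by simp only [W, mul_zero, zero_mul]
  refine ⟨fun m => 2 * k * lam * (-Complex.I * W a (k ^ 2 + l ^ 2 + m ^ 2))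
      + 4 * mu * k * m ^ 2 * (-Complex.I * D (k ^ 2 + l ^ 2 + m ^ 2)), ?_, fun m hm => ?_⟩
  · have hWa := differentiable_integral_mul_phi a ht hg
    fun_prop
  · have hslope := sub_smul_dslope (fun c => W a c - W mu c) 0 ((k : ℂ) ^ 2 + l ^ 2 + m ^ 2)
    rw [eq_div_iff hm]
    simp only [smul_eq_mul, sub_zero, hW0, sub_self] at hslope
    linear_combination (4 * (mu : ℂ) * k * m ^ 2 * -Complex.I) * hslope

/-- The function `H₁` of the paper extends analytically across the points `m = ± i√(k²+l²)`:
there is an entire function `H` agreeing with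
`(2k(λ(k²+l²)+m²(λ+2μ))W⁽¹⁾ − 4μk m² W⁽²⁾)/(k²+l²+m²)` wherever `k²+l²+m² ≠ 0`. -/
theorem H1_extends_entire (lam mu : ℝ) (hmu : 0 < mu) (hl : 0 < lam + 2 * mu)
    (k l : ℝ) (hkl : 0 < k ^ 2 + l ^ 2) (t : ℝ) (ht : 0 ≤ t)
    (g : ℝ → ℂ) (hg : ContinuousOn g (Icc (0 : ℝ) t)) :
    ∃ H : ℂ → ℂ, Differentiable ℂ H ∧
      ∀ m : ℂ, (k : ℂ) ^ 2 + (l : ℂ) ^ 2 + m ^ 2 ≠ 0 →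
        H m = (2 * (k : ℂ) * ((lam : ℂ) * ((k : ℂ) ^ 2 + (l : ℂ) ^ 2)
                  + m ^ 2 * ((lam : ℂ) + 2 * (mu : ℂ))) *
                (-Complex.I * ∫ s in (0 : ℝ)..t, ((t - s : ℝ) : ℂ) *
                  phi (((lam : ℂ) + 2 * (mu : ℂ)) * ((k : ℂ) ^ 2 + (l : ℂ) ^ 2 + m ^ 2) *
                    ((t - s : ℝ) : ℂ) ^ 2) * g s)
              - 4 * (mu : ℂ) * (k : ℂ) * m ^ 2 *
                (-Complex.I * ∫ s in (0 : ℝ)..t, ((t - s : ℝ) : ℂ) *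
                  phi ((mu : ℂ) * ((k : ℂ) ^ 2 + (l : ℂ) ^ 2 + m ^ 2) *
                    ((t - s : ℝ) : ℂ) ^ 2) * g s)) /
            ((k : ℂ) ^ 2 + (l : ℂ) ^ 2 + m ^ 2) :=
  H1_extends_entire_general lam mu k l t ht g hg
end
end

section
/- Let λ, μ ∈ ℝ with μ ≠ 0 and λ + 2μ ≠ 0, let k, l ∈ ℝ, and let m, m₁₂ ∈ ℂ satisfy (λ+2μ)·m₁₂² = μ·m² − (λ+μ)·(k²+l²). Let C be the 3×3 complex matrix with rows ( 2μk m₁₂ , 2μ m₁₂ l , λ(k²+l²) + m₁₂²(λ+2μ) ), ( −μkl , μ(m²−l²) , 2μml ), ( −μ(m²−k²) , μkl , −2μkm ). Then det C = μ³ m² ( (k²+l²−m²)² − 4(k²+l²)·m·m₁₂ ). -/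
/-!
The quadratic relation for `m₁₂` turns the entry `λ(k²+l²) + m₁₂²(λ+2μ)` of `C` into
`μ(m² − (k²+l²))`, which removes `λ` from the matrix; the determinant of the resulting matrix
is a polynomial identity in `μ, k, l, m, m₁₂`, valid over any commutative ring.
-/

theorem det_elastodynamic_matrix {R : Type*} [CommRing R] (μ k l m n : R) :
    Matrix.det
      !![2 * μ * k * n, 2 * μ * n * l, μ * (m ^ 2 - (k ^ 2 + l ^ 2));
        -(μ * k * l), μ * (m ^ 2 - l ^ 2), 2 * μ * m * l;
        -(μ * (m ^ 2 - k ^ 2)), μ * k * l, -(2 * μ * k * m)]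
      = μ ^ 3 * m ^ 2 * ((k ^ 2 + l ^ 2 - m ^ 2) ^ 2 - 4 * (k ^ 2 + l ^ 2) * m * n) := by
  rw [Matrix.det_fin_three]
  simp only [Matrix.of_apply, Matrix.cons_val', Matrix.cons_val_zero, Matrix.cons_val_one,
    Matrix.cons_val_two, Matrix.empty_val', Matrix.cons_val_fin_one, Matrix.head_cons,
    Matrix.head_fin_const, Matrix.tail_cons]
  ring

theorem det_C_general (lam mu : ℝ) (k l : ℝ)
    (m m12 : ℂ)
    (hrel : ((lam : ℂ) + 2 * (mu : ℂ)) * m12 ^ 2 =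
      (mu : ℂ) * m ^ 2 - ((lam : ℂ) + (mu : ℂ)) * ((k : ℂ) ^ 2 + (l : ℂ) ^ 2)) :
    Matrix.det
      !![2 * (mu : ℂ) * (k : ℂ) * m12,
          2 * (mu : ℂ) * m12 * (l : ℂ),
          (lam : ℂ) * ((k : ℂ) ^ 2 + (l : ℂ) ^ 2) + m12 ^ 2 * ((lam : ℂ) + 2 * (mu : ℂ));
        -((mu : ℂ) * (k : ℂ) * (l : ℂ)),
          (mu : ℂ) * (m ^ 2 - (l : ℂ) ^ 2),
          2 * (mu : ℂ) * m * (l : ℂ);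
        -((mu : ℂ) * (m ^ 2 - (k : ℂ) ^ 2)),
          (mu : ℂ) * (k : ℂ) * (l : ℂ),
          -(2 * (mu : ℂ) * (k : ℂ) * m)]
      = (mu : ℂ) ^ 3 * m ^ 2 *
          (((k : ℂ) ^ 2 + (l : ℂ) ^ 2 - m ^ 2) ^ 2 -
            4 * ((k : ℂ) ^ 2 + (l : ℂ) ^ 2) * m * m12) := by
  have hentry : (lam : ℂ) * ((k : ℂ) ^ 2 + (l : ℂ) ^ 2) + m12 ^ 2 * ((lam : ℂ) + 2 * (mu : ℂ)) =
      (mu : ℂ) * (m ^ 2 - ((k : ℂ) ^ 2 + (l : ℂ) ^ 2)) := by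
    linear_combination hrel
  rw [hentry]
  exact det_elastodynamic_matrix _ _ _ _ _

/-- The determinant `Δ₁ = det C` of the coefficient matrix of the linear system for
`U⁽²⁾, V⁽²⁾, W⁽²⁾`: `Δ₁ = μ³ m² ((k²+l²−m²)² − 4(k²+l²) m m₁₂)`. -/
theorem det_C (lam mu : ℝ) (hmu : mu ≠ 0) (hl : lam + 2 * mu ≠ 0) (k l : ℝ)
    (m m12 : ℂ)
    (hrel : ((lam : ℂ) + 2 * (mu : ℂ)) * m12 ^ 2 =
      (mu : ℂ) * m ^ 2 - ((lam : ℂ) + (mu : ℂ)) * ((k : ℂ) ^ 2 + (l : ℂ) ^ 2)) :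
    Matrix.det
      !![2 * (mu : ℂ) * (k : ℂ) * m12,
          2 * (mu : ℂ) * m12 * (l : ℂ),
          (lam : ℂ) * ((k : ℂ) ^ 2 + (l : ℂ) ^ 2) + m12 ^ 2 * ((lam : ℂ) + 2 * (mu : ℂ));
        -((mu : ℂ) * (k : ℂ) * (l : ℂ)),
          (mu : ℂ) * (m ^ 2 - (l : ℂ) ^ 2),
          2 * (mu : ℂ) * m * (l : ℂ);
        -((mu : ℂ) * (m ^ 2 - (k : ℂ) ^ 2)),
          (mu : ℂ) * (k : ℂ) * (l : ℂ),
          -(2 * (mu : ℂ) * (k : ℂ) * m)]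
      = (mu : ℂ) ^ 3 * m ^ 2 *
          (((k : ℂ) ^ 2 + (l : ℂ) ^ 2 - m ^ 2) ^ 2 -
            4 * ((k : ℂ) ^ 2 + (l : ℂ) ^ 2) * m * m12) :=
  det_C_general lam mu k l m m12 hrel
end
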